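/- Let 𝒪 be a factorial ring, let f, g ∈ 𝒪 be relatively prime elements, and let h ∈ 𝒪 be arbitrary. Then the sequence 0 → 𝒪/(f, h) → 𝒪/(f, gh) → 𝒪/(f, g) → 0 is exact, where the first map is induced by multiplication by g (which is well defined since g·(f,h) ⊆ (f, gh)) and the second map is the natural surjection. That is: multiplication by g gives an injective 𝒪-module map 𝒪/(f,h) → 𝒪/(f,gh) whose image is exactly the kernel of the natural projection 𝒪/(f,gh) → 𝒪/(f,g). -/

import Mathlib

open Ideal

/-- Multiplication by `g` induces a well-defined `𝒪`-module map `𝒪/(f,h) → 𝒪/(f,gh)`,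
since `g·(f,h) ⊆ (f,gh)`. -/
noncomputable def mulQMap {O : Type*} [CommRing O] (f g h : O) :
    (O ⧸ Ideal.span {f, h}) →ₗ[O] O ⧸ Ideal.span {f, g * h} :=
  Submodule.mapQ (Ideal.span {f, h}) (Ideal.span {f, g * h}) (LinearMap.lsmul O O g)
    (by
      rw [Ideal.span_le]
      rintro x hx
      simp only [Set.mem_insert_iff, Set.mem_singleton_iff] at hx
      simp only [SetLike.mem_coe, Submodule.mem_comap, LinearMap.lsmul_apply, smul_eq_mul]
      rcases hx with rfl | rfl
      · exact Ideal.mul_mem_left _ g (Ideal.subset_span (Set.mem_insert _ _))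
      · exact Ideal.subset_span (Set.mem_insert_of_mem _ rfl))

/-- The natural surjection `𝒪/(f,gh) → 𝒪/(f,g)`. -/
noncomputable def projQMap {O : Type*} [CommRing O] (f g h : O) :
    (O ⧸ Ideal.span {f, g * h}) → O ⧸ Ideal.span {f, g} :=
  Ideal.Quotient.factor (S := Ideal.span {f, g * h}) (T := Ideal.span {f, g})
    (by
      rw [Ideal.span_le]
      rintro x hx
      simp only [Set.mem_insert_iff, Set.mem_singleton_iff] at hx
      rcases hx with rfl | rfl
      · exact Ideal.subset_span (Set.mem_insert _ _)
      · exact Ideal.mul_mem_right h _ (Ideal.subset_span (Set.mem_insert_of_mem _ rfl)))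

section QuotientSequence

variable {O : Type*} [CommRing O]

theorem IsRelPrime.mem_span_pair_of_mul_mem [DecompositionMonoid O] {f g : O}
    (hfg : IsRelPrime f g) {h x : O} (hx : g * x ∈ span {f, g * h}) : x ∈ span {f, h} := by
  obtain ⟨a, b, hab⟩ := mem_span_pair.mp hx
  obtain ⟨c, hc⟩ : f ∣ x - b * h :=
    hfg.dvd_of_dvd_mul_left ⟨a, by linear_combination -hab⟩
  exact mem_span_pair.mpr ⟨c, b, by linear_combination -hc⟩

theorem mem_span_pair_iff_exists_sub_mul_mem_span_pair_mul {f g x : O} (h : O) :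
    x ∈ span {f, g} ↔ ∃ y, x - g * y ∈ span {f, g * h} := by
  constructor
  · intro hx
    obtain ⟨a, b, hab⟩ := mem_span_pair.mp hx
    exact ⟨b, mem_span_pair.mpr ⟨a, 0, by linear_combination hab⟩⟩
  · rintro ⟨y, hy⟩
    obtain ⟨a, b, hab⟩ := mem_span_pair.mp hy
    exact mem_span_pair.mpr ⟨a, b * h + y, by linear_combination hab⟩

variable (f g h : O)

@[simp]
theorem mulQMap_mk (x : O) : mulQMap f g h (Ideal.Quotient.mk _ x) = Ideal.Quotient.mk _ (g * x) :=
  rfl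

@[simp]
theorem projQMap_mk (x : O) : projQMap f g h (Ideal.Quotient.mk _ x) = Ideal.Quotient.mk _ x :=
  Ideal.Quotient.factor_mk _ x

theorem injective_mulQMap [DecompositionMonoid O] (hfg : IsRelPrime f g) :
    Function.Injective (mulQMap f g h) := by
  refine (injective_iff_map_eq_zero _).mpr fun x hx => ?_
  obtain ⟨x, rfl⟩ := Ideal.Quotient.mk_surjective x
  rw [mulQMap_mk, Ideal.Quotient.eq_zero_iff_mem] at hx
  exact Ideal.Quotient.eq_zero_iff_mem.mpr (hfg.mem_span_pair_of_mul_mem hx)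

theorem exact_mulQMap_projQMap : Function.Exact (mulQMap f g h) (projQMap f g h) := by
  intro y
  obtain ⟨x, rfl⟩ := Ideal.Quotient.mk_surjective y
  rw [projQMap_mk, Ideal.Quotient.eq_zero_iff_mem,
    mem_span_pair_iff_exists_sub_mul_mem_span_pair_mul h]
  constructor
  · rintro ⟨y, hy⟩
    exact ⟨Ideal.Quotient.mk _ y, (Ideal.Quotient.eq.mpr hy).symm⟩
  · rintro ⟨z, hz⟩
    obtain ⟨y, rfl⟩ := Ideal.Quotient.mk_surjective z
    exact ⟨y, Ideal.Quotient.eq.mp hz.symm⟩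

theorem surjective_projQMap : Function.Surjective (projQMap f g h) :=
  Ideal.Quotient.factor_surjective _

end QuotientSequence

/-- Lemma 1.5, case (i): for `𝒪` factorial, `f, g` relatively prime and `h` arbitrary, the
sequence `0 → 𝒪/(f,h) → 𝒪/(f,gh) → 𝒪/(f,g) → 0` is exact, the first map being
multiplication by `g` and the second the natural surjection. -/
theorem exact_mul_quotient_seq_of_isRelPrime {O : Type*} [CommRing O] [IsDomain O]
    [UniqueFactorizationMonoid O] (f g h : O) (hfg : IsRelPrime f g) :
    Function.Injective (mulQMap f g h) ∧
    Function.Exact (mulQMap f g h) (projQMap f g h) ∧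
    Function.Surjective (projQMap f g h) :=
  ⟨injective_mulQMap f g h hfg, exact_mulQMap_projQMap f g h, surjective_projQMap f g h⟩
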